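/- Let A be the ℕ×ℕ matrix with entries A_{i,j} = h_{j-i}(a_1,...,a_i) for i,j ≥ 1 (zero if j < i), and let B be the ℕ×ℕ matrix with entries B_{i,j} = (-1)^{i-j} e_{i-j}(a_1,...,a_{i-1}) (zero if j > i). Then B A = Id, i.e. ∑_k B_{n,k} A_{k,r} = δ_{n,r} for all n, r ≥ 1. -/

import Mathlib

/-!
Write `D_q(J, M) = ∑_{j ≤ J} (-1)^j e_j h_{M-j}` (`partialDualitySum a q J M`) for the
alternating sum in the variables `a 0, …, a (q-1)`. Pascal's rules `e_{j+1}(q+1) = e_{j+1}(q) + a_q e_j(q)` and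
`h_{m+1}(q+1) = h_{m+1}(q) + a_q h_m(q+1)` make the `a_q`-contributions cancel, so that
`D_{q+1}(J+1, M) - D_q(J, M)` is the single term `(-1)^{J+1} e_{J+1}(q) h_{M-J-1}(q+1)`.
Accumulating these increments from `q = n, J = 0` turns the sum of the theorem into
`D_r(r-n, r-n)`; with `J + 1 = M` the same recurrence shows that `D_q(M, M)` does not depend on
`q`, so it equals its value `δ_{M,0}` at `q = 0`.
-/

/-- Elementary symmetric polynomial `e_m` in the first `n` entries of `a`. -/
noncomputable def esymm (n m : ℕ) (a : ℕ → ℂ) : ℂ :=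
  ∑ S ∈ (Finset.range n).powersetCard m, ∏ i ∈ S, a i

/-- Complete homogeneous symmetric polynomial `h_m` in the first `r` entries of `a`. -/
noncomputable def hsymm (r m : ℕ) (a : ℕ → ℂ) : ℂ :=
  ∑ σ ∈ (Finset.range r).sym m, (Multiset.map a σ.val).prod

open Finset

section

variable (a : ℕ → ℂ)

lemma esymm_zero_right (p : ℕ) : esymm p 0 a = 1 := by
  simp [esymm]

lemma hsymm_zero_right (p : ℕ) : hsymm p 0 a = 1 := by
  simp [hsymm, Sym.eq_nil_of_card_zero]

lemma esymm_zero_succ (m : ℕ) : esymm 0 (m + 1) a = 0 := by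
  rw [esymm, powersetCard_eq_empty.mpr (by simp), sum_empty]

lemma hsymm_zero_succ (m : ℕ) : hsymm 0 (m + 1) a = 0 := by
  simp [hsymm]

lemma esymm_succ_succ (p m : ℕ) :
    esymm (p + 1) (m + 1) a = esymm p (m + 1) a + a p * esymm p m a := by
  have hp : p ∉ range p := notMem_range_self
  have hnotin {S : Finset ℕ} (hS : S ∈ (range p).powersetCard m) : p ∉ S :=
    fun h => hp ((mem_powersetCard.mp hS).1 h)
  have hdisj : Disjoint ((range p).powersetCard (m + 1))
      (((range p).powersetCard m).image (insert p)) := by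
    simp only [disjoint_right, mem_image]
    rintro _ ⟨S, -, rfl⟩ h
    exact hp ((mem_powersetCard.mp h).1 (mem_insert_self p S))
  rw [esymm, range_add_one, powersetCard_succ_insert hp, sum_union hdisj,
    sum_image fun S hS T hT h => by
      rw [← erase_insert (hnotin hS), ← erase_insert (hnotin hT), h], esymm, esymm, mul_sum]
  exact congrArg _ (sum_congr rfl fun S hS => prod_insert (hnotin hS))

lemma hsymm_succ_succ (p m : ℕ) :
    hsymm (p + 1) (m + 1) a = hsymm p (m + 1) a + a p * hsymm (p + 1) m a := by
  have hfree : ((range (p + 1)).sym (m + 1)).filter (p ∉ ·) = (range p).sym (m + 1) := by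
    ext σ
    simp only [mem_filter, mem_sym_iff, mem_range]
    exact ⟨fun ⟨h, hp⟩ i hi =>
        lt_of_le_of_ne (Nat.lt_succ_iff.mp (h i hi)) (by rintro rfl; exact hp hi),
      fun h => ⟨fun i hi => (h i hi).trans (lt_add_one p), fun hp => lt_irrefl p (h p hp)⟩⟩
  have hcons : ((range (p + 1)).sym (m + 1)).filter (p ∈ ·) =
      ((range (p + 1)).sym m).image (p ::ₛ ·) := by
    ext σ
    simp only [mem_filter, mem_image, mem_sym_iff, mem_range]
    constructor
    · rintro ⟨h, hp⟩
      obtain ⟨τ, rfl⟩ := Sym.exists_cons_of_mem hp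
      exact ⟨τ, fun i hi => h i (Sym.mem_cons_of_mem hi), rfl⟩
    · rintro ⟨τ, h, rfl⟩
      exact ⟨fun i hi => (Sym.mem_cons.mp hi).elim (fun e => e ▸ lt_add_one p) (h i),
        Sym.mem_cons_self p τ⟩
  rw [hsymm, ← sum_filter_not_add_sum_filter _ (p ∈ ·), hfree, hcons,
    sum_image fun _ _ _ _ h => (Sym.cons_inj_right _ _ _).mp h, hsymm, hsymm, mul_sum]
  simp [Sym.coe_cons]

lemma sum_neg_one_pow_mul_esymm_succ (q J : ℕ) (f : ℕ → ℂ) :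
    ∑ j ∈ range (J + 1), (-1) ^ j * esymm (q + 1) j a * f j =
      ∑ j ∈ range (J + 1), (-1) ^ j * esymm q j a * f j -
        a q * ∑ j ∈ range J, (-1) ^ j * esymm q j a * f (j + 1) := by
  rw [sum_range_succ', sum_range_succ' (fun j => (-1) ^ j * esymm q j a * f j), mul_sum,
    add_sub_right_comm, ← sum_sub_distrib]
  simp only [esymm_succ_succ, esymm_zero_right]
  exact congrArg (· + _) (sum_congr rfl fun j _ => by ring)

noncomputable def partialDualitySum (q J M : ℕ) : ℂ :=
  ∑ j ∈ range (J + 1), (-1) ^ j * esymm q j a * hsymm q (M - j) a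

lemma partialDualitySum_succ_succ {J M : ℕ} (h : J < M) (q : ℕ) :
    partialDualitySum a (q + 1) (J + 1) M =
      partialDualitySum a q J M +
        (-1) ^ (J + 1) * esymm q (J + 1) a * hsymm (q + 1) (M - (J + 1)) a := by
  have hsplit : ∀ j ∈ range (J + 1),
      hsymm (q + 1) (M - j) a = hsymm q (M - j) a + a q * hsymm (q + 1) (M - (j + 1)) a := by
    intro j hj
    have hM : M - j = M - (j + 1) + 1 := by have := mem_range.mp hj; omega
    rw [hM, hsymm_succ_succ]
  rw [partialDualitySum, sum_neg_one_pow_mul_esymm_succ, sum_range_succ, partialDualitySum,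
    sum_congr rfl fun j hj => by rw [hsplit j hj]]
  have hfactor :
      ∑ j ∈ range (J + 1), (-1) ^ j * esymm q j a * (a q * hsymm (q + 1) (M - (j + 1)) a) =
      a q * ∑ j ∈ range (J + 1), (-1) ^ j * esymm q j a * hsymm (q + 1) (M - (j + 1)) a := by
    rw [mul_sum]
    exact sum_congr rfl fun _ _ => by ring
  simp only [mul_add, sum_add_distrib, hfactor]
  ring

lemma partialDualitySum_self_succ (q M : ℕ) :
    partialDualitySum a (q + 1) M M = partialDualitySum a q M M := by
  cases M with
  | zero => simp [partialDualitySum, esymm_zero_right, hsymm_zero_right]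
  | succ M =>
    rw [partialDualitySum_succ_succ a (lt_add_one M), partialDualitySum, partialDualitySum,
      sum_range_succ _ (M + 1)]
    simp [hsymm_zero_right]

lemma partialDualitySum_self (q M : ℕ) :
    partialDualitySum a q M M = if M = 0 then 1 else 0 := by
  induction q with
  | zero =>
    cases M with
    | zero => simp [partialDualitySum, esymm_zero_right, hsymm_zero_right]
    | succ M => simp [partialDualitySum, sum_range_succ', esymm_zero_succ, hsymm_zero_succ]
  | succ q ih => rw [partialDualitySum_self_succ, ih]

lemma sum_Icc_eq_partialDualitySum (n J r : ℕ) (h : n + J ≤ r) :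
    ∑ k ∈ Icc n (n + J), (-1 : ℂ) ^ (k - n) * esymm (k - 1) (k - n) a * hsymm k (r - k) a =
      partialDualitySum a (n + J) J (r - n) := by
  induction J with
  | zero => simp [partialDualitySum, esymm_zero_right]
  | succ J ih =>
    rw [← add_assoc, sum_Icc_succ_top (by omega), ih (by omega),
      partialDualitySum_succ_succ a (by omega)]
    have h1 : n + J + 1 - n = J + 1 := by omega
    have h2 : r - (n + J + 1) = r - n - (J + 1) := by omega
    rw [h1, h2, Nat.add_sub_cancel]

end

theorem stmt_6_general (a : ℕ → ℂ) (n r : ℕ) :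
    ∑ k ∈ Finset.Icc n r, (-1 : ℂ) ^ (k - n) * esymm (k - 1) (k - n) a * hsymm k (r - k) a
      = if n = r then 1 else 0 := by
  rcases le_or_gt n r with h | h
  · obtain ⟨J, rfl⟩ := Nat.exists_eq_add_of_le h
    rw [sum_Icc_eq_partialDualitySum a n J (n + J) le_rfl, Nat.add_sub_cancel_left,
      partialDualitySum_self]
    simp
  · rw [Icc_eq_empty_of_lt h, sum_empty, if_neg h.ne']

/-- The matrices `B_{n,k} = (-1)^{n-k} e_{k-n}(a_1,…,a_{k-1})` and
`A_{k,r} = h_{r-k}(a_1,…,a_k)` satisfy `B A = Id`: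
`∑_{k=n}^{r} (-1)^{n-k} e_{k-n}(a_1,…,a_{k-1}) h_{r-k}(a_1,…,a_k) = δ_{n,r}` for `n, r ≥ 1`. -/
theorem stmt_6 (a : ℕ → ℂ) (n r : ℕ) (hn : 1 ≤ n) (hr : 1 ≤ r) :
    ∑ k ∈ Finset.Icc n r, (-1 : ℂ) ^ (k - n) * esymm (k - 1) (k - n) a * hsymm k (r - k) a
      = if n = r then 1 else 0 :=
  stmt_6_general a n r
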